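/- arXiv:2406.05825 — 2 statements merged into one kernel-verified Lean document; each statement's English description precedes it below -/
import Mathlib

section
/- Let T = T_h^k be a perfect k-ary tree with k ≥ 3 and h ≥ 1, and let f be an independent broadcast on T of maximum weight (an α_b-broadcast). Then f(v) ≤ 1 for every vertex v of T, and f(l) = 1 for every leaf l of T. -/
variable {V : Type*}

/-- The eccentricity of a vertex: the maximum distance to any vertex. -/
noncomputable def ecc (G : SimpleGraph V) [Fintype V] (v : V) : ℕ :=
  Finset.univ.sup (fun u => G.dist u v)

/-- A broadcast on `G`: a function assigning each vertex a power at most its eccentricity. -/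
def IsBroadcast (G : SimpleGraph V) [Fintype V] (f : V → ℕ) : Prop :=
  ∀ v, f v ≤ ecc G v

/-- `u` hears the broadcasting vertex `v`. -/
def Hears (G : SimpleGraph V) (f : V → ℕ) (u v : V) : Prop :=
  0 < f v ∧ G.dist u v ≤ f v

/-- An independent broadcast: no broadcasting vertex hears another vertex. -/
def IsIndepBroadcast (G : SimpleGraph V) [Fintype V] (f : V → ℕ) : Prop :=
  IsBroadcast G f ∧ ∀ v w, 0 < f v → v ≠ w → ¬ Hears G f v w

/-- The broadcast independence number: the maximum weight of an independent broadcast. -/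
noncomputable def alphaB (G : SimpleGraph V) [Fintype V] : ℕ :=
  sSup {w | ∃ f, IsIndepBroadcast G f ∧ w = ∑ v, f v}

/-- Vertices of the perfect `k`-ary tree of height `h`: strings of length at most `h`
over a `k`-letter alphabet. -/
abbrev KVert (k h : ℕ) : Type := {l : List (Fin k) // l.length ≤ h}

noncomputable instance (k h : ℕ) : Fintype (KVert k h) :=
  (List.finite_length_le (Fin k) h).fintype

/-- The perfect `k`-ary tree of height `h`: each string of length less than `h` is
adjacent to its `k` one-letter extensions. -/
def karyTree (k h : ℕ) : SimpleGraph (KVert k h) where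
  Adj x y := (∃ a : Fin k, x.1 = a :: y.1) ∨ (∃ a : Fin k, y.1 = a :: x.1)
  symm := ⟨fun x y hxy => hxy.symm⟩
  loopless := ⟨by
    rintro x (⟨a, ha⟩ | ⟨a, ha⟩) <;>
    · have := congrArg List.length ha
      rw [List.length_cons] at this
      omega⟩

/-- A leaf of the perfect `k`-ary tree of height `h`: a string of length `h`. -/
def IsKLeaf (k h : ℕ) (v : KVert k h) : Prop := v.1.length = h

/-!
Let `f` be a heaviest independent broadcast and suppose some vertex has power `t ≥ 2`; take such
a vertex `v` as deep as possible. Silencing `v` lets a set `S` of vertices on one level broadcast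
with power `1` alongside the rest of `f`: the descendants of `v` at distance `t - 1` if `v` lies at
least `t` levels above the leaves, and otherwise the leaves below the ancestor of `v` at most
`t / 2` levels up. Because `v` is deepest, every other vertex of power `≥ 2` is at least as far
from `S` as from `v`. Since `k ≥ 3`, `S` has more than `t` elements except when `v` is a leaf and
`t = k = 3`; there the three sibling leaves replace `v` at equal weight, after which either another
vertex of power `≥ 2` remains (and we induct on their number) or the grandparent of `v` can
broadcast as well. All distances come from `d(x, y) = |x| + |y| - 2 · (depth of the lowest common ancestor)`.

Once all powers are at most `1`, a silent leaf can broadcast itself if its parent is silent, and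
otherwise it and its siblings can replace their parent.
-/

open Finset SimpleGraph

namespace List

variable {α : Type*} [DecidableEq α]

def commonSuffix : List α → List α → List α
  | [], _ => []
  | a :: x, y => if a :: x <:+ y then a :: x else commonSuffix x y

theorem commonSuffix_suffix_left : ∀ x y : List α, commonSuffix x y <:+ x
  | [], _ => nil_suffix
  | a :: x, y => by
    rw [commonSuffix]
    split
    · exact suffix_refl _
    · exact (commonSuffix_suffix_left x y).trans (suffix_cons a x)

theorem commonSuffix_suffix_right : ∀ x y : List α, commonSuffix x y <:+ y
  | [], _ => nil_suffix
  | a :: x, y => by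
    rw [commonSuffix]
    split
    · assumption
    · exact commonSuffix_suffix_right x y

theorem suffix_commonSuffix : ∀ {x y z : List α}, z <:+ x → z <:+ y → z <:+ commonSuffix x y
  | [], _, _, hx, _ => by simpa [commonSuffix] using hx
  | a :: x, y, z, hx, hy => by
    rw [commonSuffix]
    split
    · exact hx
    · rcases suffix_cons_iff.1 hx with rfl | hx
      · contradiction
      · exact suffix_commonSuffix hx hy

theorem length_le_length_commonSuffix {x y z : List α} (hx : z <:+ x) (hy : z <:+ y) :
    z.length ≤ (commonSuffix x y).length :=
  (suffix_commonSuffix hx hy).length_le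

theorem min_length_commonSuffix_le (x y z : List α) :
    min (commonSuffix x y).length (commonSuffix y z).length ≤ (commonSuffix x z).length := by
  rcases suffix_or_suffix_of_suffix (commonSuffix_suffix_right x y)
    (commonSuffix_suffix_left y z) with hxy | hyz
  · exact (min_le_left _ _).trans <| length_le_length_commonSuffix (commonSuffix_suffix_left x y)
      (hxy.trans (commonSuffix_suffix_right y z))
  · exact (min_le_right _ _).trans <| length_le_length_commonSuffix
      (hyz.trans (commonSuffix_suffix_left x y)) (commonSuffix_suffix_right y z)

theorem length_commonSuffix_le_cons (a : α) (x y : List α) :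
    (commonSuffix x y).length ≤ (commonSuffix (a :: x) y).length :=
  length_le_length_commonSuffix ((commonSuffix_suffix_left x y).trans (suffix_cons a x))
    (commonSuffix_suffix_right x y)

theorem length_commonSuffix_cons_le (a : α) (x y : List α) :
    (commonSuffix (a :: x) y).length ≤ (commonSuffix x y).length + 1 := by
  rcases suffix_cons_iff.1 (commonSuffix_suffix_left (a :: x) y) with h | h
  · have hxy : x <:+ y := (suffix_cons a x).trans (h ▸ commonSuffix_suffix_right (a :: x) y)
    have := length_le_length_commonSuffix (suffix_refl x) hxy
    simp only [h, length_cons]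
    omega
  · have := length_le_length_commonSuffix h (commonSuffix_suffix_right (a :: x) y)
    omega

end List

section Broadcast

variable {G : SimpleGraph V} {f : V → ℕ} {u v : V}

/-- Once `v` is silenced, `u` can broadcast with power `1`: it hears no other broadcaster of `f`
and is not heard by any. -/
def IsFreeExcept (G : SimpleGraph V) (f : V → ℕ) (v u : V) : Prop :=
  ∀ w, w ≠ v → 0 < f w → max (f w) 1 < G.dist u w

theorem IsFreeExcept.eq_zero (hu : IsFreeExcept G f v u) (huv : u ≠ v) : f u = 0 := by
  by_contra h
  simpa using hu u huv (Nat.pos_of_ne_zero h)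

def spread [DecidableEq V] (f : V → ℕ) (v : V) (S : Finset V) : V → ℕ :=
  fun u => if u ∈ S then 1 else if u = v then 0 else f u

theorem spread_eq_of_isFreeExcept [DecidableEq V] {S : Finset V}
    (hfree : ∀ u ∈ S, IsFreeExcept G f v u) (u : V) :
    spread f v S u = (if u ∈ S then 1 else 0) + Function.update f v 0 u := by
  unfold spread
  by_cases huv : u = v
  · subst huv
    split_ifs <;> simp_all
  by_cases huS : u ∈ S
  · simp [huS, huv, (hfree u huS).eq_zero huv]
  · simp [huS, huv]

variable [Fintype V]

theorem one_le_ecc [Nontrivial V] (hG : G.Connected) (v : V) : 1 ≤ ecc G v := by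
  obtain ⟨u, hu⟩ := exists_ne v
  exact (hG.pos_dist_of_ne hu).trans_le (le_sup (f := fun u => G.dist u v) (mem_univ u))

theorem sum_le_alphaB (hf : IsIndepBroadcast G f) : ∑ v, f v ≤ alphaB G :=
  le_csSup ⟨∑ v, ecc G v, by rintro _ ⟨g, hg, rfl⟩; exact sum_le_sum fun v _ => hg.1 v⟩
    ⟨f, hf, rfl⟩

theorem IsIndepBroadcast.max_lt_dist (hf : IsIndepBroadcast G f) {w : V} (hv : 0 < f v)
    (hw : 0 < f w) (hvw : v ≠ w) : max (f v) (f w) < G.dist v w := by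
  have hvw' : f w < G.dist v w := by
    by_contra! hle
    exact hf.2 v w hv hvw ⟨hw, hle⟩
  have hwv : f v < G.dist w v := by
    by_contra! hle
    exact hf.2 w v hw hvw.symm ⟨hv, hle⟩
  rw [SimpleGraph.dist_comm] at hwv
  omega

theorem isFreeExcept_of_near (hf : IsIndepBroadcast G f) (hv : 0 < f v)
    (hnear : ∀ w, G.dist u w ≤ 1 → G.dist v w ≤ f v)
    (hbig : ∀ w, w ≠ v → 2 ≤ f w → f w < G.dist u w) : IsFreeExcept G f v u := by
  intro w hwv hw
  have hvw := hf.max_lt_dist hv hw hwv.symm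
  rcases le_or_gt 2 (f w) with h2 | h1
  · have := hbig w hwv h2
    omega
  · have : 1 < G.dist u w := by
      by_contra! hle
      have := hnear w hle
      omega
    omega

theorem isFreeExcept_of_dist_lt (hG : G.Connected) (hf : IsIndepBroadcast G f)
    (hsmall : ∀ w, w ≠ v → f w ≤ 1) (hvu : G.dist v u < f v) : IsFreeExcept G f v u :=
  isFreeExcept_of_near hf (by omega)
    (fun w hw => by have := hG.dist_triangle (u := v) (v := u) (w := w); omega)
    (fun w hwv hw => by have := hsmall w hwv; omega)

variable [DecidableEq V]

theorem isIndepBroadcast_spread [Nontrivial V] (hG : G.Connected) (hf : IsIndepBroadcast G f)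
    {S : Finset V} (hS : G.IsIndepSet S) (hfree : ∀ u ∈ S, IsFreeExcept G f v u) :
    IsIndepBroadcast G (spread f v S) := by
  have hold : ∀ x, x ∉ S → x ≠ v → spread f v S x = f x := fun x hxS hxv => by
    simp [spread, hxS, hxv]
  have hcases : ∀ x, 0 < spread f v S x → x ∈ S ∨ (x ∉ S ∧ x ≠ v ∧ 0 < f x) := by
    intro x hx
    by_cases hxS : x ∈ S
    · exact .inl hxS
    by_cases hxv : x = v
    · subst hxv
      simp [spread, hxS] at hx
    · exact .inr ⟨hxS, hxv, hold x hxS hxv ▸ hx⟩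
  refine ⟨fun x => ?_, fun x y hx hxy ⟨hy, hd⟩ => ?_⟩
  · unfold spread
    split_ifs
    exacts [one_le_ecc hG x, Nat.zero_le _, hf.1 x]
  rcases hcases x hx with hxS | ⟨hxS, hxv, hfx⟩ <;>
    rcases hcases y hy with hyS | ⟨hyS, hyv, hfy⟩
  · have := hG.one_lt_dist_of_ne_of_not_adj hxy (hS hxS hyS hxy)
    simp only [spread, hyS, if_true] at hd
    omega
  · have := hfree x hxS y hyv hfy
    rw [hold y hyS hyv] at hd
    omega
  · have := hfree y hyS x hxv hfx
    simp only [spread, hyS, if_true] at hd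
    rw [SimpleGraph.dist_comm] at hd
    omega
  · rw [hold y hyS hyv] at hd
    exact hf.2 x y hfx hxy ⟨hfy, hd⟩

theorem sum_spread {S : Finset V} (hfree : ∀ u ∈ S, IsFreeExcept G f v u) :
    ∑ u, spread f v S u + f v = ∑ u, f u + #S := by
  simp only [spread_eq_of_isFreeExcept hfree, sum_add_distrib, sum_boole, filter_mem_eq_inter,
    univ_inter, Nat.cast_id, sum_update_of_mem (mem_univ v)]
  rw [← add_sum_erase _ _ (mem_univ v), sdiff_singleton_eq_erase]
  omega

theorem filter_two_le_spread {S : Finset V} (hfree : ∀ u ∈ S, IsFreeExcept G f v u) :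
    univ.filter (2 ≤ spread f v S ·) = (univ.filter (2 ≤ f ·)).erase v := by
  ext u
  rw [mem_filter, mem_erase, mem_filter]
  simp only [mem_univ, true_and, spread]
  by_cases huv : u = v
  · subst huv
    split_ifs <;> simp_all
  by_cases huS : u ∈ S
  · simp [huS, huv, (hfree u huS).eq_zero huv]
  · simp [huS, huv]

theorem exists_sum_lt_of_isFreeExcept [Nontrivial V] (hG : G.Connected)
    (hf : IsIndepBroadcast G f) {S : Finset V} (hS : G.IsIndepSet S)
    (hfree : ∀ u ∈ S, IsFreeExcept G f v u) (hcard : f v < #S) :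
    ∃ g, IsIndepBroadcast G g ∧ ∑ u, f u < ∑ u, g u :=
  ⟨_, isIndepBroadcast_spread hG hf hS hfree, by have := sum_spread hfree; omega⟩

end Broadcast

section KaryTree

variable {k h : ℕ}

/-- The ancestors of a vertex are the suffixes of its string, so this is the depth of the lowest
common ancestor of `u` and `v`. -/
def lcaDepth (u v : KVert k h) : ℕ := (List.commonSuffix u.1 v.1).length

theorem lcaDepth_le_left (u v : KVert k h) : lcaDepth u v ≤ u.1.length :=
  (List.commonSuffix_suffix_left _ _).length_le

theorem lcaDepth_le_right (u v : KVert k h) : lcaDepth u v ≤ v.1.length :=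
  (List.commonSuffix_suffix_right _ _).length_le

theorem length_le_lcaDepth {σ : List (Fin k)} {u v : KVert k h} (hu : σ <:+ u.1)
    (hv : σ <:+ v.1) : σ.length ≤ lcaDepth u v :=
  List.length_le_length_commonSuffix hu hv

theorem min_lcaDepth_le (u v w : KVert k h) :
    min (lcaDepth u v) (lcaDepth v w) ≤ lcaDepth u w :=
  List.min_length_commonSuffix_le _ _ _

theorem length_eq_of_adj {x y : KVert k h} (hxy : (karyTree k h).Adj x y) :
    x.1.length = y.1.length + 1 ∨ y.1.length = x.1.length + 1 := by
  rcases hxy with ⟨a, ha⟩ | ⟨a, ha⟩ <;> simp [ha]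

theorem isIndepSet_of_length {s : Set (KVert k h)}
    (hs : ∀ x ∈ s, ∀ y ∈ s, x.1.length ≠ y.1.length + 1) : (karyTree k h).IsIndepSet s :=
  fun x hx y hy _ hxy => (length_eq_of_adj hxy).elim (hs x hx y hy) (hs y hy x hx)

def parent (u : KVert k h) : KVert k h :=
  ⟨u.1.tail, (List.tail_suffix u.1).length_le.trans u.2⟩

theorem parent_eq_of_suffix {u v : KVert k h} (hs : v.1 <:+ u.1)
    (hl : u.1.length = v.1.length + 1) : parent u = v := by
  have hlen : v.1.length = u.1.tail.length := by simp; omega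
  exact Subtype.ext ((List.suffix_of_suffix_length_le hs (List.tail_suffix u.1)
    hlen.le).eq_of_length hlen).symm

theorem karyTree_connected : (karyTree k h).Connected := by
  have hroot : ∀ u : KVert k h, (karyTree k h).Reachable u ⟨[], Nat.zero_le h⟩ := by
    rintro ⟨l, hl⟩
    induction l with
    | nil => rfl
    | cons a l ih =>
      have hl' : l.length ≤ h := by simp at hl; omega
      have hadj : (karyTree k h).Adj ⟨a :: l, hl⟩ ⟨l, hl'⟩ := .inl ⟨a, rfl⟩
      exact hadj.reachable.trans (ih hl')
  exact (connected_iff _).2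
    ⟨fun u v => (hroot u).trans (hroot v).symm, ⟨⟨[], Nat.zero_le h⟩⟩⟩

theorem dist_add_length_le_of_suffix {x y : KVert k h} (hxy : y.1 <:+ x.1) :
    (karyTree k h).dist x y + y.1.length ≤ x.1.length := by
  obtain ⟨l, hl⟩ := x
  induction l with
  | nil =>
    obtain rfl : y = ⟨[], hl⟩ := Subtype.ext (List.suffix_nil.1 hxy)
    simp
  | cons a l ih =>
    rcases List.suffix_cons_iff.1 hxy with he | hs
    · obtain rfl : y = ⟨a :: l, hl⟩ := Subtype.ext he
      simp
    · have hl' : l.length ≤ h := by simp at hl; omega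
      have hadj : (karyTree k h).Adj ⟨a :: l, hl⟩ ⟨l, hl'⟩ := .inl ⟨a, rfl⟩
      have htri :=
        karyTree_connected.dist_triangle (u := ⟨a :: l, hl⟩) (v := ⟨l, hl'⟩) (w := y)
      have hih : (karyTree k h).dist ⟨l, hl'⟩ y + y.1.length ≤ l.length := ih hl' hs
      rw [dist_eq_one_iff_adj.2 hadj] at htri
      simp only [List.length_cons]
      omega

theorem length_add_length_le_walk {x y : KVert k h} (p : (karyTree k h).Walk x y) :
    x.1.length + y.1.length ≤ p.length + 2 * lcaDepth x y := by
  induction p with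
  | @nil u =>
    have := length_le_lcaDepth (u := u) (v := u) (List.suffix_refl _) (List.suffix_refl _)
    simp only [Walk.length_nil]
    omega
  | @cons u v w huv p ih =>
    rw [Walk.length_cons]
    unfold lcaDepth at *
    rcases huv with ⟨a, ha⟩ | ⟨a, ha⟩
    · have hcs : (List.commonSuffix v.1 w.1).length ≤ (List.commonSuffix u.1 w.1).length :=
        ha ▸ List.length_commonSuffix_le_cons a v.1 w.1
      have hlen : u.1.length = v.1.length + 1 := by simp [ha]
      omega
    · have hcs : (List.commonSuffix v.1 w.1).length ≤ (List.commonSuffix u.1 w.1).length + 1 :=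
        ha ▸ List.length_commonSuffix_cons_le a u.1 w.1
      have hlen : v.1.length = u.1.length + 1 := by simp [ha]
      omega

theorem dist_add_two_mul_lcaDepth (x y : KVert k h) :
    (karyTree k h).dist x y + 2 * lcaDepth x y = x.1.length + y.1.length := by
  obtain ⟨p, hp⟩ := karyTree_connected.exists_walk_length_eq_dist x y
  have hlower := length_add_length_le_walk p
  let m : KVert k h := ⟨List.commonSuffix x.1 y.1, (lcaDepth_le_left x y).trans x.2⟩
  have hxm := dist_add_length_le_of_suffix (x := x) (y := m) (List.commonSuffix_suffix_left _ _)
  have hym := dist_add_length_le_of_suffix (x := y) (y := m) (List.commonSuffix_suffix_right _ _)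
  have htri := karyTree_connected.dist_triangle (u := x) (v := m) (w := y)
  rw [SimpleGraph.dist_comm (u := m)] at htri
  change _ + lcaDepth x y ≤ _ at hxm hym
  omega

theorem dist_add_length_of_suffix {x y : KVert k h} (hxy : y.1 <:+ x.1) :
    (karyTree k h).dist x y + y.1.length = x.1.length := by
  have := dist_add_two_mul_lcaDepth x y
  have := length_le_lcaDepth hxy (List.suffix_refl _)
  have := lcaDepth_le_right x y
  omega

theorem ecc_le (v : KVert k h) : ecc (karyTree k h) v ≤ h + v.1.length :=
  Finset.sup_le fun u _ => by
    have := dist_add_two_mul_lcaDepth u v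
    have := u.2
    omega

theorem kVert_nontrivial (hk : 1 ≤ k) (hh : 1 ≤ h) : Nontrivial (KVert k h) :=
  ⟨⟨[], Nat.zero_le h⟩, ⟨[⟨0, hk⟩], hh⟩, by simp⟩

theorem eq_or_eq_parent_of_dist_le_one {u w : KVert k h} (hu : u.1.length = h)
    (hd : (karyTree k h).dist u w ≤ 1) : w = u ∨ w = parent u := by
  rcases Nat.le_one_iff_eq_zero_or_eq_one.1 hd with h0 | h1
  · exact .inl (karyTree_connected.dist_eq_zero_iff.1 h0).symm
  · rcases dist_eq_one_iff_adj.1 h1 with ⟨a, ha⟩ | ⟨a, ha⟩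
    · exact .inr (Subtype.ext (by simp [parent, ha]))
    · have := w.2
      simp [ha] at this
      omega

theorem dist_parent_lt {u v : KVert k h} (hvu : v.1.length ≤ u.1.length) (hne : v ≠ u) :
    (karyTree k h).dist v (parent u) < (karyTree k h).dist v u := by
  have hu := dist_add_two_mul_lcaDepth v u
  have hp := dist_add_two_mul_lcaDepth v (parent u)
  have hmin := min_lcaDepth_le v u (parent u)
  have hup : (parent u).1.length ≤ lcaDepth u (parent u) :=
    length_le_lcaDepth (List.tail_suffix u.1) (List.suffix_refl _)
  have hpl : (parent u).1.length = u.1.length - 1 := List.length_tail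
  have := lcaDepth_le_left v u
  have := karyTree_connected.pos_dist_of_ne hne
  omega

theorem dist_le_dist_of_lcaDepth {u v w : KVert k h} (hvu : v.1.length ≤ u.1.length)
    (hwv : w.1.length ≤ v.1.length)
    (hlca : 2 * (v.1.length - lcaDepth v u) < (karyTree k h).dist v w) :
    (karyTree k h).dist v w ≤ (karyTree k h).dist u w := by
  have := dist_add_two_mul_lcaDepth v w
  have := dist_add_two_mul_lcaDepth u w
  have := lcaDepth_le_right v w
  rcases min_le_iff.1 (min_lcaDepth_le v u w) with hmin | hmin <;> omega

def descendants (σ : List (Fin k)) (n : ℕ) (hσ : σ.length + n ≤ h) : Finset (KVert k h) :=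
  univ.image fun z : List.Vector (Fin k) n =>
    ⟨z.1 ++ σ, by rw [List.length_append, z.2]; omega⟩

variable {σ : List (Fin k)} {n : ℕ} {hσ : σ.length + n ≤ h}

theorem card_descendants : #(descendants σ n hσ) = k ^ n := by
  rw [descendants, card_image_of_injective, card_univ, card_vector, Fintype.card_fin]
  intro z z' hzz
  exact Subtype.ext (List.append_cancel_right (congrArg Subtype.val hzz))

theorem mem_descendants {u : KVert k h} (hu : u ∈ descendants σ n hσ) :
    σ <:+ u.1 ∧ u.1.length = σ.length + n := by
  obtain ⟨z, -, rfl⟩ := mem_image.1 hu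
  exact ⟨List.suffix_append _ _, by simp [z.2, add_comm]⟩

theorem isIndepSet_descendants : (karyTree k h).IsIndepSet (descendants σ n hσ) :=
  isIndepSet_of_length fun x hx y hy => by
    rw [(mem_descendants hx).2, (mem_descendants hy).2]
    omega

end KaryTree

theorem lt_pow_or_eq_three {k m t : ℕ} (hk : 3 ≤ k) (ht : 2 ≤ t) (htm : t ≤ 2 * m + 1) :
    t < k ^ m ∨ (k = 3 ∧ m = 1 ∧ t = 3) := by
  have bernoulli : ∀ j, 2 * j + 1 ≤ k ^ j := fun j => by
    have : 1 + j * 2 ≤ (1 + 2) ^ j :=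
      one_add_mul_le_pow_of_sq_nonneg (by positivity) (by positivity) (by positivity) j
    norm_num at this
    have := Nat.pow_le_pow_left hk j
    omega
  rcases m with _ | _ | m
  · omega
  · rw [zero_add, pow_one]
    by_cases htk : t < k
    · exact .inl htk
    · exact .inr ⟨by omega, rfl, by omega⟩
  · left
    calc t < 3 * (2 * (m + 1) + 1) := by omega
      _ ≤ k * k ^ (m + 1) := Nat.mul_le_mul hk (bernoulli (m + 1))
      _ = k ^ (m + 2) := (pow_succ' k (m + 1)).symm

section MaximumBroadcast

variable {k h : ℕ} {f : KVert k h → ℕ} {v : KVert k h}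

theorem isFreeExcept_of_deepest (hf : IsIndepBroadcast (karyTree k h) f) (hv : 0 < f v)
    (hdeep : ∀ w, 2 ≤ f w → w.1.length ≤ v.1.length) {u : KVert k h}
    (hvu : v.1.length ≤ u.1.length) (hlca : 2 * (v.1.length - lcaDepth v u) ≤ f v)
    (hnear : (karyTree k h).dist v u < f v ∨
      (u.1.length = h ∧ (karyTree k h).dist v u ≤ f v)) :
    IsFreeExcept (karyTree k h) f v u := by
  refine isFreeExcept_of_near hf hv (fun w hw => ?_) (fun w hwv hw => ?_)
  · rcases hnear with hlt | ⟨hleaf, hle⟩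
    · have := karyTree_connected.dist_triangle (u := v) (v := u) (w := w)
      omega
    · rcases eq_or_eq_parent_of_dist_le_one hleaf hw with rfl | rfl
      · exact hle
      · by_cases hvu' : v = u
        · subst hvu'
          omega
        · have := dist_parent_lt hvu hvu'
          omega
  · have := hf.max_lt_dist hv (by omega) hwv.symm
    have := dist_le_dist_of_lcaDepth hvu (hdeep w hw) (by omega)
    omega

theorem isFreeExcept_of_mem_descendants (hf : IsIndepBroadcast (karyTree k h) f)
    (hv : 0 < f v) (hdeep : ∀ w, 2 ≤ f w → w.1.length ≤ v.1.length) {x n : ℕ}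
    (hσ : (v.1.drop x).length + n ≤ h) (hxn : x ≤ n) (hx : 2 * x ≤ f v)
    (hnear : x + n < f v ∨ ((v.1.drop x).length + n = h ∧ x + n ≤ f v)) {u : KVert k h}
    (hu : u ∈ descendants (v.1.drop x) n hσ) : IsFreeExcept (karyTree k h) f v u := by
  obtain ⟨hsuf, hlen⟩ := mem_descendants hu
  have hlca := length_le_lcaDepth (List.drop_suffix x v.1) hsuf
  have hd := dist_add_two_mul_lcaDepth v u
  have := lcaDepth_le_left v u
  rw [List.length_drop] at hlca hlen hnear
  apply isFreeExcept_of_deepest hf hv hdeep <;> omega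

theorem exists_free_set_of_deepest (hk : 3 ≤ k) (hf : IsIndepBroadcast (karyTree k h) f)
    (hv : 2 ≤ f v) (hdeep : ∀ w, 2 ≤ f w → w.1.length ≤ v.1.length) :
    ∃ S : Finset (KVert k h), (karyTree k h).IsIndepSet S ∧
      (∀ u ∈ S, IsFreeExcept (karyTree k h) f v u) ∧
      (f v < #S ∨ (#S = 3 ∧ f v = 3 ∧ v.1.length = h)) := by
  have hecc := (hf.1 v).trans (ecc_le v)
  by_cases hshallow : h < v.1.length + f v
  · -- the leaves below the ancestor `x` levels up from `v` are within distance `e + 2 * x` of `v`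
    set e := h - v.1.length
    set x := min ((f v - e) / 2) v.1.length
    have hσ : (v.1.drop x).length + (e + x) = h := by rw [List.length_drop]; omega
    refine ⟨descendants (v.1.drop x) (e + x) hσ.le, isIndepSet_descendants,
      fun u hu => isFreeExcept_of_mem_descendants hf (by omega) hdeep hσ.le (by omega) (by omega)
        (.inr ⟨hσ, by omega⟩) hu, ?_⟩
    rw [card_descendants]
    rcases lt_pow_or_eq_three hk hv (m := e + x) (by omega) with hlt | ⟨rfl, hm, ht⟩
    · exact .inl hlt
    · exact .inr ⟨by rw [hm]; rfl, ht, by omega⟩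
  · refine ⟨descendants (v.1.drop 0) (f v - 1) (by simp; omega), isIndepSet_descendants,
      fun u hu => isFreeExcept_of_mem_descendants hf (by omega) hdeep _ (by omega) (by omega)
        (.inl (by omega)) hu, .inl ?_⟩
    rw [card_descendants]
    have := lt_pow_or_eq_three hk hv (m := f v - 1) (by omega)
    omega

theorem exists_sum_lt_of_leaf_of_eq_three (hk : 3 ≤ k) (hf : IsIndepBroadcast (karyTree k h) f)
    (hv : f v = 3) (hleaf : v.1.length = h) (hsmall : ∀ w, w ≠ v → f w ≤ 1) :
    ∃ g, IsIndepBroadcast (karyTree k h) g ∧ ∑ u, f u < ∑ u, g u := by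
  have hh : 2 ≤ h := by
    have := (hf.1 v).trans (ecc_le v)
    omega
  have := kVert_nontrivial (by omega : 1 ≤ k) (by omega : 1 ≤ h)
  have hdeep : ∀ w, 2 ≤ f w → w.1.length ≤ v.1.length := fun w hw => by
    by_cases hwv : w = v
    · rw [hwv]
    · have := hsmall w hwv
      omega
  have hσ : (v.1.drop 1).length + 1 = h := by simp; omega
  set S := descendants (v.1.drop 1) 1 hσ.le
  let g : KVert k h := ⟨v.1.drop 2, (List.drop_suffix 2 v.1).length_le.trans v.2⟩
  have hgl : g.1.length = h - 2 := by simp [g, hleaf]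
  have hvg : (karyTree k h).dist v g = 2 := by
    have := dist_add_length_of_suffix (List.drop_suffix 2 v.1) (x := v) (y := g)
    omega
  have hgu : ∀ u ∈ S, (karyTree k h).dist g u = 2 := fun u hu => by
    have hgs : g.1 <:+ v.1.drop 1 := by
      simpa [g, List.drop_drop] using List.drop_suffix 1 (v.1.drop 1)
    have := dist_add_length_of_suffix (hgs.trans (mem_descendants hu).1)
    have := (mem_descendants hu).2
    rw [SimpleGraph.dist_comm]
    omega
  have hgS : g ∉ S := fun hg => by simpa using hgu g hg
  refine exists_sum_lt_of_isFreeExcept karyTree_connected hf (v := v) (S := insert g S) ?_ ?_ ?_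
  · rw [coe_insert]
    refine Set.pairwise_insert.2
      ⟨isIndepSet_descendants, fun u hu _ => ⟨fun hadj => ?_, fun hadj => ?_⟩⟩
    · simpa [dist_eq_one_iff_adj.2 hadj] using hgu u hu
    · simpa [dist_eq_one_iff_adj.2 hadj.symm] using hgu u hu
  · intro u hu
    rcases mem_insert.1 hu with rfl | hu
    · exact isFreeExcept_of_dist_lt karyTree_connected hf hsmall (by omega)
    · exact isFreeExcept_of_mem_descendants hf (by omega) hdeep hσ.le le_rfl (by omega)
        (.inr ⟨hσ, by omega⟩) hu
  · rw [card_insert_of_notMem hgS, card_descendants, pow_one]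
    omega

theorem exists_sum_lt_of_two_le (hk : 3 ≤ k) (hh : 1 ≤ h)
    (hf : IsIndepBroadcast (karyTree k h) f) (hbig : ∃ v, 2 ≤ f v) :
    ∃ g, IsIndepBroadcast (karyTree k h) g ∧ ∑ u, f u < ∑ u, g u := by
  have := kVert_nontrivial (by omega : 1 ≤ k) hh
  induction hn : #(univ.filter (2 ≤ f ·)) using Nat.strong_induction_on generalizing f with
  | _ n ih =>
  obtain ⟨v, hvbig, hdeep⟩ := exists_max_image (univ.filter (2 ≤ f ·)) (fun u => u.1.length)
    (hbig.imp fun u hu => by simpa using hu)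
  simp only [mem_filter, mem_univ, true_and] at hvbig hdeep
  obtain ⟨S, hS, hfree, hcard | ⟨hS3, hv3, hleaf⟩⟩ :=
    exists_free_set_of_deepest hk hf hvbig hdeep
  · exact exists_sum_lt_of_isFreeExcept karyTree_connected hf hS hfree hcard
  -- `spread f v S` has the same weight as `f` and one vertex of power `≥ 2` fewer
  by_cases hother : ∃ w, w ≠ v ∧ 2 ≤ f w
  swap
  · exact exists_sum_lt_of_leaf_of_eq_three hk hf hv3 hleaf
      fun w hwv => not_lt.1 fun hw => hother ⟨w, hwv, hw⟩
  obtain ⟨w, hwv, hw⟩ := hother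
  have hfilter := filter_two_le_spread hfree
  have hw' : 2 ≤ spread f v S w := by
    have : w ∈ univ.filter (2 ≤ spread f v S ·) := by
      rw [hfilter]
      exact mem_erase.2 ⟨hwv, by simpa using hw⟩
    simpa using this
  have hlt : #(univ.filter (2 ≤ spread f v S ·)) < n := by
    rw [hfilter, ← hn]
    exact card_erase_lt_of_mem (by simpa using hvbig)
  obtain ⟨g, hg, hsum⟩ := ih _ hlt (isIndepBroadcast_spread karyTree_connected hf hS hfree)
    ⟨w, hw'⟩ rfl
  exact ⟨g, hg, by have := sum_spread hfree; omega⟩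

theorem le_one_of_sum_eq_alphaB (hk : 3 ≤ k) (hh : 1 ≤ h)
    (hf : IsIndepBroadcast (karyTree k h) f)
    (hmax : ∑ v, f v = alphaB (karyTree k h)) (v : KVert k h) : f v ≤ 1 := by
  by_contra! hv
  obtain ⟨g, hg, hlt⟩ := exists_sum_lt_of_two_le hk hh hf ⟨v, hv⟩
  have := sum_le_alphaB hg
  omega

theorem isFreeExcept_parent_of_leaf (hf1 : ∀ w, f w ≤ 1) {u : KVert k h} (hu : u.1.length = h)
    (hu0 : f u = 0) : IsFreeExcept (karyTree k h) f (parent u) u := by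
  intro w hwp hw
  by_contra! hd
  have := hf1 w
  rcases eq_or_eq_parent_of_dist_le_one (w := w) hu (by omega) with rfl | rfl
  · omega
  · exact hwp rfl

theorem exists_sum_lt_of_leaf_eq_zero (hk : 2 ≤ k) (hh : 1 ≤ h)
    (hf : IsIndepBroadcast (karyTree k h) f) (hf1 : ∀ w, f w ≤ 1) {l : KVert k h}
    (hl : l.1.length = h) (hl0 : f l = 0) :
    ∃ g, IsIndepBroadcast (karyTree k h) g ∧ ∑ u, f u < ∑ u, g u := by
  have := kVert_nontrivial (by omega : 1 ≤ k) hh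
  have hp : (parent l).1.length + 1 = h := by simp [parent]; omega
  rcases Nat.le_one_iff_eq_zero_or_eq_one.1 (hf1 (parent l)) with hp0 | hp1
  · exact exists_sum_lt_of_isFreeExcept karyTree_connected hf (S := {l}) (by simp)
      (by simpa using isFreeExcept_parent_of_leaf hf1 hl hl0) (by simp [hp0])
  refine exists_sum_lt_of_isFreeExcept karyTree_connected hf (v := parent l)
    (isIndepSet_descendants (hσ := hp.le))
    (fun u hu => ?_) (by rw [card_descendants, pow_one]; omega)
  obtain ⟨hsuf, hlen⟩ := mem_descendants hu
  have hpu := parent_eq_of_suffix hsuf hlen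
  have hu0 : f u = 0 := by
    by_contra h0
    have hne : parent l ≠ u := fun h => by rw [← h] at hlen; omega
    have := hf.max_lt_dist (by omega) (Nat.pos_of_ne_zero h0) hne
    have := dist_add_length_of_suffix hsuf
    rw [SimpleGraph.dist_comm] at this
    omega
  rw [← hpu]
  exact isFreeExcept_parent_of_leaf hf1 (by omega) hu0

end MaximumBroadcast

/-- in a maximum-weight independent broadcast on a perfect `k`-ary tree with
`k ≥ 3` and `h ≥ 1`, every vertex broadcasts with power at most `1` and every leaf
broadcasts with power exactly `1`. -/
theorem stmt6 (k h : ℕ) (hk : 3 ≤ k) (hh : 1 ≤ h) (f : KVert k h → ℕ)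
    (hf : IsIndepBroadcast (karyTree k h) f) (hmax : ∑ v, f v = alphaB (karyTree k h)) :
    (∀ v : KVert k h, f v ≤ 1) ∧ (∀ l : KVert k h, IsKLeaf k h l → f l = 1) := by
  have hle := le_one_of_sum_eq_alphaB hk hh hf hmax
  refine ⟨hle, fun l hl => ?_⟩
  by_contra hne
  obtain ⟨g, hg, hlt⟩ :=
    exists_sum_lt_of_leaf_eq_zero (by omega) hh hf hle hl (by have := hle l; omega)
  have := sum_le_alphaB hg
  omega
end

section
/- For every spider S(d_1,…,d_k), the broadcast independence number satisfies α_b(S(d_1,…,d_k)) = max over 1 ≤ t ≤ k−1 of [ (d_t + d_{t+1} − 1) + Σ_{j=t+1}^{k} (d_t + d_j − 1) ]. -/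
variable {V : Type*}

/-- Vertices of the spider `S(d 0, …, d (k-1))`: `none` is the branch vertex `u`, and
`some ⟨i, j⟩` is the vertex at distance `j + 1` from `u` on the `i`-th branch. -/
abbrev SpiderVert (k : ℕ) (d : Fin k → ℕ) : Type := Option (Σ i : Fin k, Fin (d i))

/-- The spider `S(d 0, …, d (k-1))`: the tree obtained from the star `K_{1,k}` with
center `u` by subdividing edges so that the `i`-th leaf is at distance `d i` from `u`. -/
def spider (k : ℕ) (d : Fin k → ℕ) : SimpleGraph (SpiderVert k d) where
  Adj x y :=
    match x, y with
    | none, none => False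
    | none, some ⟨_, j⟩ => (j : ℕ) = 0
    | some ⟨_, j⟩, none => (j : ℕ) = 0
    | some ⟨i, j⟩, some ⟨i', j'⟩ =>
        (i : ℕ) = (i' : ℕ) ∧ ((j : ℕ) + 1 = (j' : ℕ) ∨ (j' : ℕ) + 1 = (j : ℕ))
  symm := by
    refine ⟨?_⟩
    rintro (_ | ⟨i, j⟩) (_ | ⟨i', j'⟩) hxy <;> simp_all <;> omega
  loopless := by
    refine ⟨?_⟩
    rintro (_ | ⟨i, j⟩) hxy <;> simp_all

/-- The `i`-th leaf of the spider, at distance `d i` from the branch vertex. -/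
def spiderLeaf (k : ℕ) (d : Fin k → ℕ) (hd : ∀ i, 1 ≤ d i) (i : Fin k) : SpiderVert k d :=
  some ⟨i, ⟨d i - 1, by have := hd i; omega⟩⟩

/-- A leaf of the spider: the end vertex of a branch. -/
def IsSpiderLeaf (k : ℕ) (d : Fin k → ℕ) : SpiderVert k d → Prop
  | none => False
  | some ⟨i, j⟩ => (j : ℕ) + 1 = d i

/-!
On a spider the graph distance is the difference of depths along a leg and the sum of depths
across legs. In an independent broadcast, the broadcasting vertices `v` on a path occupy the
pairwise disjoint intervals `(depth v - f v, depth v]`; hence the weight on a leg is less than its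
length plus the depth of any broadcasting vertex off that leg, and if a single leg carries all the
broadcasting vertices the weight is at most twice the longest leg. With `m ≥ 2` occupied legs,
bound the first occupied leg through a broadcasting vertex on the second (or the branch vertex)
and every other one through a broadcasting vertex on the first; comparing the `m - 1` legs
involved with the `m - 1` longest ones gives the bound for `t = k - m`. Conversely, the bound for
`t` is attained by letting the leaf of each leg `i ≥ t` broadcast with power one less than its
distance to the leaf of leg `t` (of leg `t + 1` when `i = t`).
-/

open Finset

namespace SimpleGraph

variable {G : SimpleGraph V}

theorem le_length_of_forall_adj {D : V → V → ℕ} (hD : ∀ y, D y y = 0)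
    (hadj : ∀ x z y, G.Adj x z → D x y ≤ D z y + 1) {x y : V} (p : G.Walk x y) :
    D x y ≤ p.length := by
  induction p with
  | nil => simp [hD]
  | cons h p ih => simpa using (hadj _ _ _ h).trans (Nat.add_le_add_right ih 1)

theorem exists_walk_length_le_of_forall_exists_adj {D : V → V → ℕ}
    (hdesc : ∀ x y, x ≠ y → ∃ z, G.Adj x z ∧ D z y < D x y) (x y : V) :
    ∃ p : G.Walk x y, p.length ≤ D x y := by
  induction hn : D x y using Nat.strong_induction_on generalizing x with
  | _ n ih =>
    by_cases hxy : x = y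
    · subst hxy
      exact ⟨.nil, Nat.zero_le _⟩
    obtain ⟨z, hxz, hz⟩ := hdesc x y hxy
    obtain ⟨p, hp⟩ := ih _ (hn ▸ hz) z rfl
    exact ⟨.cons hxz p, by simp; omega⟩

theorem dist_eq_of_forall_adj {D : V → V → ℕ} (hD : ∀ y, D y y = 0)
    (hadj : ∀ x z y, G.Adj x z → D x y ≤ D z y + 1)
    (hdesc : ∀ x y, x ≠ y → ∃ z, G.Adj x z ∧ D z y < D x y) (x y : V) :
    G.dist x y = D x y := by
  obtain ⟨p, hp⟩ := exists_walk_length_le_of_forall_exists_adj hdesc x y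
  obtain ⟨q, hq⟩ := p.reachable.exists_walk_length_eq_dist
  exact le_antisymm ((dist_le p).trans hp) (hq ▸ le_length_of_forall_adj hD hadj q)

end SimpleGraph

theorem dist_le_ecc [Fintype V] (G : SimpleGraph V) (u v : V) : G.dist u v ≤ ecc G v :=
  le_sup (f := fun u => G.dist u v) (mem_univ u)

theorem Finset.sum_le_of_lt_abs_sub {ι : Type*} (s : Finset ι) (p : ι → ℤ) (f : ι → ℕ)
    (lo hi : ℤ) (hsep : ∀ a ∈ s, ∀ b ∈ s, a ≠ b → (f a : ℤ) < |p a - p b|)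
    (hlo : ∀ a ∈ s, lo ≤ p a - f a) (hhi : ∀ a ∈ s, p a ≤ hi) :
    ∑ a ∈ s, f a ≤ (hi - lo).toNat := by
  set I : ι → Finset ℤ := fun a => Ioc (p a - f a) (p a)
  have hdisj : (s : Set ι).PairwiseDisjoint I := by
    intro a ha b hb hab
    have hab' := hsep a ha b hb hab
    have hba := hsep b hb a ha hab.symm
    rw [lt_abs] at hab' hba
    refine disjoint_left.mpr fun x hxa hxb => ?_
    simp only [I, mem_Ioc] at hxa hxb
    omega
  calc ∑ a ∈ s, f a = ∑ a ∈ s, #(I a) := by simp [I, Int.card_Ioc]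
    _ = #(s.biUnion I) := (card_biUnion hdisj).symm
    _ ≤ #(Ioc lo hi) := card_le_card <| biUnion_subset.mpr fun a ha =>
          Ioc_subset_Ioc (by linarith [hlo a ha]) (hhi a ha)
    _ = (hi - lo).toNat := Int.card_Ioc lo hi

theorem Finset.sum_le_sum_of_card_le_of_forall_le {ι : Type*} [DecidableEq ι] {s t : Finset ι}
    (g : ι → ℕ) (hcard : #s ≤ #t) (hle : ∀ a ∈ s \ t, ∀ b ∈ t \ s, g a ≤ g b) :
    ∑ a ∈ s, g a ≤ ∑ b ∈ t, g b := by
  rw [← sum_inter_add_sum_sdiff s t, ← sum_inter_add_sum_sdiff t s, inter_comm]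
  refine Nat.add_le_add_left ?_ _
  calc ∑ a ∈ s \ t, g a ≤ #(s \ t) • (s \ t).sup g := sum_le_card_nsmul _ _ _ fun a ha =>
        le_sup ha
    _ ≤ #(t \ s) • (s \ t).sup g :=
        nsmul_le_nsmul_left (Nat.zero_le _) (card_sdiff_le_card_sdiff_iff.mpr hcard)
    _ ≤ ∑ b ∈ t \ s, g b :=
        card_nsmul_le_sum _ _ _ fun b hb => Finset.sup_le fun a ha => hle a ha b hb

theorem Fin.card_add_le_of_forall_le {n : ℕ} {s : Finset (Fin n)} {a : Fin n}
    (h : ∀ j ∈ s, a ≤ j) : #s + a ≤ n := by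
  have := card_le_card fun j hj => mem_Ici.mpr (h j hj)
  rw [Fin.card_Ici] at this
  omega

/-- The right-hand side of the theorem for the 0-based index `t`, i.e. the paper's `t + 1`. -/
def spiderBound {k : ℕ} (d : Fin k → ℕ) (t : Fin k) (ht : (t : ℕ) + 1 < k) : ℕ :=
  (d t + d ⟨(t : ℕ) + 1, ht⟩ - 1) + ∑ j ∈ Ioi t, (d t + d j - 1)

section spiderBound

variable {k : ℕ} {d : Fin k → ℕ}

theorem two_mul_le_spiderBound (hd : ∀ i, 1 ≤ d i) (t : Fin k) (ht : (t : ℕ) + 1 < k) :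
    2 * d ⟨(t : ℕ) + 1, ht⟩ ≤ spiderBound d t ht := by
  have hmem : (⟨(t : ℕ) + 1, ht⟩ : Fin k) ∈ Ioi t := mem_Ioi.mpr (Fin.lt_def.mpr (by simp))
  have := single_le_sum (f := fun j => d t + d j - 1) (fun _ _ => Nat.zero_le _) hmem
  have := hd t
  unfold spiderBound
  omega

theorem add_sum_le_spiderBound (hmono : Monotone d) {P : Finset (Fin k)} {q₁ q₂ t : Fin k}
    (hq₁ : q₁ ∈ P) (hq₁_le : ∀ j ∈ P, q₁ ≤ j) (hq₂_le : ∀ j ∈ P.erase q₁, q₂ ≤ j)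
    (ht : (t : ℕ) + 1 < k) (htP : (t : ℕ) + #P = k) :
    (d q₁ + d q₂ - 1) + ∑ j ∈ P.erase q₁, (d q₁ + d j - 1) ≤ spiderBound d t ht := by
  have hcard_erase : #(P.erase q₁) + 1 = #P := card_erase_add_one hq₁
  have hq₁t : d q₁ ≤ d t := hmono <| Fin.le_def.mpr <| by
    have := Fin.card_add_le_of_forall_le hq₁_le
    omega
  have hq₂t : d q₂ ≤ d ⟨(t : ℕ) + 1, ht⟩ := hmono <| Fin.le_def.mpr <| by
    have := Fin.card_add_le_of_forall_le hq₂_le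
    simp only
    omega
  have hcard : #(P.erase q₁) ≤ #(Ioi t) := by
    rw [Fin.card_Ioi]
    omega
  have hexchange : ∀ a ∈ P.erase q₁ \ Ioi t, ∀ b ∈ Ioi t \ P.erase q₁,
      d t + d a - 1 ≤ d t + d b - 1 := by
    intro a ha b hb
    have hab : a ≤ b := (not_lt.mp (mem_Ioi.not.mp (mem_sdiff.mp ha).2)).trans
      (mem_Ioi.mp (mem_sdiff.mp hb).1).le
    have := hmono hab
    omega
  unfold spiderBound
  gcongr ?_ + ?_
  · omega
  calc ∑ j ∈ P.erase q₁, (d q₁ + d j - 1) ≤ ∑ j ∈ P.erase q₁, (d t + d j - 1) :=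
        sum_le_sum fun j _ => by omega
    _ ≤ ∑ j ∈ Ioi t, (d t + d j - 1) :=
        sum_le_sum_of_card_le_of_forall_le (fun j => d t + d j - 1) hcard hexchange

end spiderBound

namespace Spider

variable {k : ℕ} {d : Fin k → ℕ}

def leg (v : SpiderVert k d) : Option (Fin k) := v.map Sigma.fst

def depth : SpiderVert k d → ℕ
  | none => 0
  | some ⟨_, j⟩ => (j : ℕ) + 1

theorem depth_none : depth (none : SpiderVert k d) = 0 := rfl

theorem leg_eq_none {v : SpiderVert k d} : leg v = none ↔ v = none := Option.map_eq_none_iff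

theorem depth_eq_zero_of_leg_eq_none {v : SpiderVert k d} (h : leg v = none) : depth v = 0 := by
  rw [leg_eq_none.mp h, depth_none]

theorem depth_le_of_leg_eq_some {v : SpiderVert k d} {i : Fin k} (h : leg v = some i) :
    depth v ≤ d i := by
  rcases v with _ | ⟨i', j⟩ <;> simp only [leg, Option.map_none, Option.map_some,
    reduceCtorEq, Option.some.injEq] at h
  subst h
  exact j.isLt

theorem depth_le {M : ℕ} (hM : ∀ i, d i ≤ M) (v : SpiderVert k d) : depth v ≤ M := by
  rcases h : leg v with _ | i
  · simp [depth_eq_zero_of_leg_eq_none h]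
  · exact (depth_le_of_leg_eq_some h).trans (hM i)

def treeDist (u v : SpiderVert k d) : ℕ :=
  if leg u = leg v then Nat.dist (depth u) (depth v) else depth u + depth v

theorem treeDist_self (v : SpiderVert k d) : treeDist v v = 0 := by
  simp [treeDist, Nat.dist_self]

theorem treeDist_comm (u v : SpiderVert k d) : treeDist u v = treeDist v u := by
  simp only [treeDist, eq_comm (a := leg u), Nat.dist_comm, Nat.add_comm]

theorem treeDist_of_leg_ne {u v : SpiderVert k d} (h : leg u ≠ leg v) :
    treeDist u v = depth u + depth v := if_neg h

theorem treeDist_le_depth_add_depth (u v : SpiderVert k d) :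
    treeDist u v ≤ depth u + depth v := by
  unfold treeDist Nat.dist
  split_ifs <;> omega

theorem treeDist_le_succ_of_adj {x z : SpiderVert k d} (y : SpiderVert k d)
    (h : (spider k d).Adj x z) : treeDist x y ≤ treeDist z y + 1 := by
  rcases x with _ | ⟨i, j⟩ <;> rcases z with _ | ⟨i', j'⟩ <;>
    simp only [spider, Fin.val_inj] at h <;> (try obtain ⟨rfl, h⟩ := h) <;>
    rcases y with _ | ⟨i'', j''⟩ <;>
    simp only [treeDist, leg, depth, Option.map_none, Option.map_some, reduceCtorEq,
      Option.some.injEq, if_false, if_true, Nat.dist] <;>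
    (try split_ifs) <;> omega

theorem exists_adj_treeDist_lt_of_not_below {i : Fin k} {j : ℕ} (hj : j < d i)
    {y : SpiderVert k d} (hy : leg y ≠ some i ∨ depth y < j + 1) :
    ∃ z, (spider k d).Adj (some ⟨i, ⟨j, hj⟩⟩) z ∧
      treeDist z y < treeDist (some ⟨i, ⟨j, hj⟩⟩) y := by
  rcases j with _ | j
  · refine ⟨none, by simp [spider], ?_⟩
    rcases y with _ | ⟨i', j'⟩ <;> simp [treeDist, leg, depth, Nat.dist] at hy ⊢
    split_ifs <;> omega
  · refine ⟨some ⟨i, ⟨j, by omega⟩⟩, by simp [spider], ?_⟩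
    rcases y with _ | ⟨i', j'⟩ <;> simp [treeDist, leg, depth, Nat.dist] at hy ⊢
    split_ifs <;> omega

theorem exists_adj_treeDist_lt {x y : SpiderVert k d} (hxy : x ≠ y) :
    ∃ z, (spider k d).Adj x z ∧ treeDist z y < treeDist x y := by
  rcases x with _ | ⟨i, ⟨j, hj⟩⟩ <;> rcases y with _ | ⟨i', ⟨j', hj'⟩⟩
  · exact absurd rfl hxy
  · exact ⟨some ⟨i', ⟨0, by omega⟩⟩, by simp [spider], by simp [treeDist, leg, depth, Nat.dist]⟩
  · exact exists_adj_treeDist_lt_of_not_below hj (by simp [leg])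
  · by_cases hup : i = i' ∧ j < j'
    · obtain ⟨rfl, hjj'⟩ := hup
      refine ⟨some ⟨i, ⟨j + 1, by omega⟩⟩, by simp [spider], ?_⟩
      simp [treeDist, leg, depth, Nat.dist]
      omega
    · refine exists_adj_treeDist_lt_of_not_below hj ?_
      simp only [leg, depth, Option.map_some, Option.some.injEq, ne_eq]
      by_contra! h
      obtain ⟨rfl, h⟩ := h
      exact hxy (by simp; omega)

theorem dist_eq_treeDist (u v : SpiderVert k d) : (spider k d).dist u v = treeDist u v :=
  SimpleGraph.dist_eq_of_forall_adj treeDist_self (fun _ _ y h => treeDist_le_succ_of_adj y h)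
    (fun _ _ h => exists_adj_treeDist_lt h) u v

theorem ecc_le {M : ℕ} (hM : ∀ i, d i ≤ M) (v : SpiderVert k d) :
    ecc (spider k d) v ≤ 2 * M :=
  Finset.sup_le fun u _ => by
    rw [dist_eq_treeDist]
    linarith [treeDist_le_depth_add_depth u v, depth_le hM u, depth_le hM v]

def OnRay (i : Fin k) (v : SpiderVert k d) : Prop := leg v = none ∨ leg v = some i

theorem depth_le_of_onRay {i : Fin k} {v : SpiderVert k d} (h : OnRay i v) : depth v ≤ d i := by
  rcases h with h | h
  · simp [depth_eq_zero_of_leg_eq_none h]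
  · exact depth_le_of_leg_eq_some h

theorem natCast_treeDist_of_onRay {i : Fin k} {u v : SpiderVert k d} (hu : OnRay i u)
    (hv : OnRay i v) : (treeDist u v : ℤ) = |(depth u : ℤ) - depth v| := by
  unfold treeDist Nat.dist
  split_ifs with h
  · rcases abs_cases ((depth u : ℤ) - depth v) with ⟨h', _⟩ | ⟨h', _⟩ <;> omega
  · rcases hu with hu | hu <;> rcases hv with hv | hv
    · exact absurd (hu.trans hv.symm) h
    · simp [depth_eq_zero_of_leg_eq_none hu]
    · simp [depth_eq_zero_of_leg_eq_none hv]
    · exact absurd (hu.trans hv.symm) h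

def occupiedLegs (f : SpiderVert k d → ℕ) : Finset (Fin k) :=
  {i | ∃ v, leg v = some i ∧ 0 < f v}

def legSum (f : SpiderVert k d → ℕ) (i : Fin k) : ℕ :=
  ∑ v with leg v = some i, f v

theorem sum_eq_add_sum_legSum (f : SpiderVert k d → ℕ) :
    ∑ v, f v = f none + ∑ i ∈ occupiedLegs f, legSum f i := by
  rw [← sum_fiberwise univ leg f, Fintype.sum_option]
  congr 1
  · have : ({v | leg v = none} : Finset (SpiderVert k d)) = {none} := by
      ext v
      simp [leg_eq_none]
    rw [this, sum_singleton]
  · refine (sum_subset (subset_univ _) fun i _ hi => ?_).symm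
    refine sum_eq_zero fun v hv => ?_
    by_contra h
    exact hi (by simpa [occupiedLegs] using ⟨v, (mem_filter.mp hv).2, Nat.pos_of_ne_zero h⟩)

theorem leg_spiderLeaf (hd : ∀ i, 1 ≤ d i) (i : Fin k) : leg (spiderLeaf k d hd i) = some i :=
  rfl

theorem depth_spiderLeaf (hd : ∀ i, 1 ≤ d i) (i : Fin k) :
    depth (spiderLeaf k d hd i) = d i := by
  have := hd i
  simp only [spiderLeaf, depth]
  omega

theorem spiderLeaf_injective (hd : ∀ i, 1 ≤ d i) : Function.Injective (spiderLeaf k d hd) :=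
  fun i j h => Option.some.inj (by simpa only [leg_spiderLeaf] using congrArg leg h)

theorem treeDist_spiderLeaf (hd : ∀ i, 1 ≤ d i) {i j : Fin k} (h : i ≠ j) :
    treeDist (spiderLeaf k d hd i) (spiderLeaf k d hd j) = d i + d j := by
  rw [treeDist_of_leg_ne (by simpa [leg_spiderLeaf] using h), depth_spiderLeaf,
    depth_spiderLeaf]

def partner (t : Fin k) (ht : (t : ℕ) + 1 < k) (i : Fin k) : Fin k :=
  if i = t then ⟨(t : ℕ) + 1, ht⟩ else t

section partner

variable {t : Fin k} (ht : (t : ℕ) + 1 < k)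

theorem partner_ne (i : Fin k) : partner t ht i ≠ i := by
  unfold partner
  split_ifs with h
  · exact fun h' => by simp [h, Fin.ext_iff] at h'
  · exact Ne.symm h

theorem partner_le {i i' : Fin k} (hi : t ≤ i) (h : i ≠ i') : partner t ht i' ≤ i := by
  unfold partner
  split_ifs with h'
  · exact Fin.le_def.mpr (Fin.lt_def.mp (lt_of_le_of_ne hi (h' ▸ h).symm))
  · exact hi

end partner

def leafBroadcast (hd : ∀ i, 1 ≤ d i) (t : Fin k) (ht : (t : ℕ) + 1 < k) (v : SpiderVert k d) :
    ℕ :=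
  ∑ i ∈ Ici t,
    (Pi.single (spiderLeaf k d hd i) (d i + d (partner t ht i) - 1) : SpiderVert k d → ℕ) v

section leafBroadcast

variable (hd : ∀ i, 1 ≤ d i) {t : Fin k} (ht : (t : ℕ) + 1 < k)

theorem leafBroadcast_spiderLeaf (i : Fin k) :
    leafBroadcast hd t ht (spiderLeaf k d hd i) =
      if t ≤ i then d i + d (partner t ht i) - 1 else 0 := by
  simp [leafBroadcast, Pi.single_apply, (spiderLeaf_injective hd).eq_iff]

theorem exists_eq_spiderLeaf_of_leafBroadcast_pos {v : SpiderVert k d}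
    (hv : 0 < leafBroadcast hd t ht v) : ∃ i, t ≤ i ∧ v = spiderLeaf k d hd i := by
  obtain ⟨i, hi, hne⟩ := exists_ne_zero_of_sum_ne_zero hv.ne'
  refine ⟨i, mem_Ici.mp hi, ?_⟩
  by_contra h
  exact hne (Pi.single_eq_of_ne h _)

theorem sum_leafBroadcast : ∑ v, leafBroadcast hd t ht v = spiderBound d t ht := by
  simp only [leafBroadcast]
  rw [sum_comm]
  simp only [Fintype.sum_pi_single']
  rw [Ici_eq_cons_Ioi, sum_cons, spiderBound]
  congr 1
  · simp [partner]
  · refine sum_congr rfl fun j hj => ?_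
    rw [partner, if_neg (mem_Ioi.mp hj).ne', Nat.add_comm]

theorem isIndepBroadcast_leafBroadcast (hmono : Monotone d) :
    IsIndepBroadcast (spider k d) (leafBroadcast hd t ht) := by
  refine ⟨fun v => ?_, fun v w hv hvw ⟨hw, hdist⟩ => ?_⟩
  · rcases Nat.eq_zero_or_pos (leafBroadcast hd t ht v) with h | h
    · exact h.trans_le (Nat.zero_le _)
    obtain ⟨i, hi, rfl⟩ := exists_eq_spiderLeaf_of_leafBroadcast_pos hd ht h
    calc leafBroadcast hd t ht (spiderLeaf k d hd i) ≤ d (partner t ht i) + d i := by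
          rw [leafBroadcast_spiderLeaf, if_pos hi]
          omega
      _ = (spider k d).dist (spiderLeaf k d hd (partner t ht i)) (spiderLeaf k d hd i) := by
          rw [dist_eq_treeDist, treeDist_spiderLeaf hd (partner_ne ht i)]
      _ ≤ ecc (spider k d) (spiderLeaf k d hd i) := dist_le_ecc _ _ _
  · obtain ⟨i, hi, rfl⟩ := exists_eq_spiderLeaf_of_leafBroadcast_pos hd ht hv
    obtain ⟨i', hi', rfl⟩ := exists_eq_spiderLeaf_of_leafBroadcast_pos hd ht hw
    have hii' : i ≠ i' := fun h => hvw (h ▸ rfl)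
    rw [dist_eq_treeDist, treeDist_spiderLeaf hd hii', leafBroadcast_spiderLeaf,
      if_pos hi'] at hdist
    have := hmono (partner_le ht hi hii')
    have := hd i
    omega

end leafBroadcast

end Spider

namespace IsIndepBroadcast

open Spider

variable {k : ℕ} {d : Fin k → ℕ} {f : SpiderVert k d → ℕ}

theorem lt_treeDist (hf : IsIndepBroadcast (spider k d) f) {v w : SpiderVert k d}
    (hv : 0 < f v) (hw : 0 < f w) (hvw : v ≠ w) : f w < treeDist v w := by
  have := hf.2 v w hv hvw
  rw [Hears, dist_eq_treeDist] at this
  omega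

theorem sum_le_of_onRay (hf : IsIndepBroadcast (spider k d) f) {i : Fin k}
    {s : Finset (SpiderVert k d)} (hs : ∀ v ∈ s, 0 < f v ∧ OnRay i v) {lo : ℤ}
    (hlo : ∀ v ∈ s, lo ≤ depth v - f v) : ∑ v ∈ s, f v ≤ ((d i : ℤ) - lo).toNat := by
  refine sum_le_of_lt_abs_sub s (fun v => depth v) f lo _ (fun a ha b hb hab => ?_) hlo
    fun v hv => by exact_mod_cast depth_le_of_onRay (hs v hv).2
  rw [← natCast_treeDist_of_onRay (hs a ha).2 (hs b hb).2, treeDist_comm]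
  exact_mod_cast hf.lt_treeDist (hs b hb).1 (hs a ha).1 hab.symm

theorem legSum_lt (hf : IsIndepBroadcast (spider k d) f) {i : Fin k} (hdi : 1 ≤ d i)
    {w : SpiderVert k d} (hw : 0 < f w) (hleg : leg w ≠ some i) :
    legSum f i < d i + depth w := by
  set s := ({v | leg v = some i} : Finset _).filter (0 < f ·)
  have hs : ∀ v ∈ s, leg v = some i ∧ 0 < f v := by simp [s]
  have hsum : legSum f i = ∑ v ∈ s, f v :=
    (sum_filter_of_ne fun _ _ h => Nat.pos_of_ne_zero h).symm
  have hbound := hf.sum_le_of_onRay (lo := 1 - depth w)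
    (fun v hv => ⟨(hs v hv).2, Or.inr (hs v hv).1⟩) fun v hv => by
      obtain ⟨hv, hfv⟩ := hs v hv
      have := hf.lt_treeDist hw hfv (fun h => hleg (h ▸ hv))
      rw [treeDist_of_leg_ne (hv ▸ hleg)] at this
      omega
  omega

theorem sum_le_two_mul_of_onRay (hf : IsIndepBroadcast (spider k d) f) {i : Fin k}
    (hray : ∀ v, 0 < f v → OnRay i v) (hpair : ∀ v, 0 < f v → ∃ w ≠ v, 0 < f w) :
    ∑ v, f v ≤ 2 * d i := by
  have hs : ∀ v ∈ ({v | 0 < f v} : Finset (SpiderVert k d)), 0 < f v := by simp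
  have hsum : ∑ v, f v = ∑ v with 0 < f v, f v :=
    (sum_filter_of_ne fun _ _ h => Nat.pos_of_ne_zero h).symm
  have hbound := hf.sum_le_of_onRay (lo := -d i)
    (fun v hv => ⟨hs v hv, hray v (hs v hv)⟩) fun v hv => by
      obtain ⟨w, hwv, hw⟩ := hpair v (hs v hv)
      have hlt : (f v : ℤ) < |(depth w : ℤ) - depth v| := by
        rw [← natCast_treeDist_of_onRay (hray w hw) (hray v (hs v hv))]
        exact_mod_cast hf.lt_treeDist hw (hs v hv) hwv
      have := depth_le_of_onRay (hray w hw)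
      have := depth_le_of_onRay (hray v (hs v hv))
      rw [lt_abs] at hlt
      omega
  omega

theorem sum_le_of_card_occupiedLegs_le_one (hf : IsIndepBroadcast (spider k d) f) {M : ℕ}
    (hM : ∀ i, d i ≤ M) (hP : #(occupiedLegs f) ≤ 1) : ∑ v, f v ≤ 2 * M := by
  by_cases hsub : ∀ v w, 0 < f v → 0 < f w → v = w
  · by_cases hex : ∃ v, 0 < f v
    · obtain ⟨v₀, hv₀⟩ := hex
      rw [Fintype.sum_eq_single v₀ fun v hv =>
        Nat.eq_zero_of_not_pos fun h => hv (hsub v v₀ h hv₀)]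
      exact (hf.1 v₀).trans (ecc_le hM v₀)
    · push Not at hex
      simp [Nat.le_zero.mp (hex _)]
  push Not at hsub
  obtain ⟨v, w, hv, hw, hvw⟩ := hsub
  obtain ⟨u, hu, hu_ne⟩ : ∃ u, 0 < f u ∧ u ≠ none := by
    by_cases h : v = none
    · exact ⟨w, hw, h ▸ hvw.symm⟩
    · exact ⟨v, hv, h⟩
  obtain ⟨i, hi⟩ := Option.ne_none_iff_exists'.mp (leg_eq_none.not.mpr hu_ne)
  have hray : ∀ x, 0 < f x → OnRay i x := by
    intro x hx
    rcases hleg : leg x with _ | j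
    · exact Or.inl hleg
    · refine Or.inr (hleg.trans (congrArg some (card_le_one.mp hP j ?_ i ?_))) <;>
        simp only [occupiedLegs, mem_filter, mem_univ, true_and]
      exacts [⟨x, hleg, hx⟩, ⟨u, hi, hu⟩]
  have hpair : ∀ x, 0 < f x → ∃ y ≠ x, 0 < f y := by
    intro x _
    by_cases h : x = v
    · exact ⟨w, h ▸ hvw.symm, hw⟩
    · exact ⟨v, Ne.symm h, hv⟩
  linarith [hf.sum_le_two_mul_of_onRay hray hpair, hM i]

theorem sum_le_spiderBound (hd : ∀ i, 1 ≤ d i) (hmono : Monotone d)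
    (hf : IsIndepBroadcast (spider k d) f) {t : Fin k} (ht : (t : ℕ) + 1 < k)
    (htP : (t : ℕ) + #(occupiedLegs f) = k) : ∑ v, f v ≤ spiderBound d t ht := by
  set P := occupiedLegs f
  have hmemP : ∀ i, i ∈ P ↔ ∃ v, leg v = some i ∧ 0 < f v := by simp [P, occupiedLegs]
  have hPne : P.Nonempty := card_pos.mp (by omega)
  set q₁ := P.min' hPne
  have hq₁ : q₁ ∈ P := P.min'_mem hPne
  have hAne : (P.erase q₁).Nonempty := card_pos.mp (by rw [card_erase_of_mem hq₁]; omega)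
  set q₂ := (P.erase q₁).min' hAne
  have hq₂ : q₂ ∈ P.erase q₁ := (P.erase q₁).min'_mem hAne
  obtain ⟨v₁, hv₁, hfv₁⟩ := (hmemP q₁).mp hq₁
  obtain ⟨v₂, hv₂, hfv₂⟩ := (hmemP q₂).mp (mem_of_mem_erase hq₂)
  have hfirst : f none + legSum f q₁ < d q₁ + d q₂ := by
    have hdepth₂ := depth_le_of_leg_eq_some hv₂
    rcases Nat.eq_zero_or_pos (f none) with h0 | h0
    · have := hf.legSum_lt (hd q₁) hfv₂ (by simpa [hv₂] using ne_of_mem_erase hq₂)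
      omega
    · have hleg := hf.legSum_lt (hd q₁) h0 (by simp [leg])
      have hv₂_ne : v₂ ≠ none := by rintro rfl; simp [leg] at hv₂
      have hcenter := hf.lt_treeDist hfv₂ h0 hv₂_ne
      rw [treeDist_of_leg_ne (hv₂ ▸ Option.some_ne_none _)] at hcenter
      rw [depth_none] at hleg hcenter
      omega
  have hrest : ∀ j ∈ P.erase q₁, legSum f j ≤ d q₁ + d j - 1 := by
    intro j hj
    have := hf.legSum_lt (hd j) hfv₁ (by simpa [hv₁] using (ne_of_mem_erase hj).symm)
    have := depth_le_of_leg_eq_some hv₁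
    omega
  calc ∑ v, f v = (f none + legSum f q₁) + ∑ j ∈ P.erase q₁, legSum f j := by
        rw [sum_eq_add_sum_legSum, ← add_sum_erase _ _ hq₁, add_assoc]
    _ ≤ (d q₁ + d q₂ - 1) + ∑ j ∈ P.erase q₁, (d q₁ + d j - 1) :=
        add_le_add (by omega) (sum_le_sum hrest)
    _ ≤ spiderBound d t ht :=
        add_sum_le_spiderBound hmono hq₁ (fun j hj => P.min'_le j hj)
          (fun j hj => (P.erase q₁).min'_le j hj) ht htP

theorem exists_sum_le_spiderBound (hk : 2 ≤ k) (hd : ∀ i, 1 ≤ d i) (hmono : Monotone d)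
    (hf : IsIndepBroadcast (spider k d) f) :
    ∃ (t : Fin k) (ht : (t : ℕ) + 1 < k), ∑ v, f v ≤ spiderBound d t ht := by
  rcases le_or_gt #(occupiedLegs f) 1 with hP | hP
  · refine ⟨⟨k - 2, by omega⟩, by simp only; omega, ?_⟩
    refine (hf.sum_le_of_card_occupiedLegs_le_one (fun i => hmono ?_) hP).trans
      (two_mul_le_spiderBound hd _ _)
    exact Fin.le_def.mpr (by simp only; omega)
  · have hcard : #(occupiedLegs f) ≤ k := (card_le_univ _).trans_eq (Fintype.card_fin k)
    exact ⟨⟨k - #(occupiedLegs f), by omega⟩, by simp only; omega,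
      hf.sum_le_spiderBound hd hmono _ (by simp only; omega)⟩

end IsIndepBroadcast

/-- the broadcast independence number of a spider `S(d_1, …, d_k)` is the
maximum over `t` (0-based index with `t + 1 < k`, i.e. the 1-based range `1 ≤ t ≤ k - 1`) of
`(d_t + d_{t+1} - 1) + Σ_{j > t} (d_t + d_j - 1)`. -/
theorem stmt11 (k : ℕ) (hk : 3 ≤ k) (d : Fin k → ℕ) (hd : ∀ i, 1 ≤ d i)
    (hmono : Monotone d) :
    alphaB (spider k d) =
      sSup {w : ℕ | ∃ (t : Fin k) (ht : (t : ℕ) + 1 < k),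
        w = (d t + d ⟨(t : ℕ) + 1, ht⟩ - 1) + ∑ j ∈ Finset.Ioi t, (d t + d j - 1)} := by
  refine csSup_eq_csSup_of_forall_exists_le ?_ ?_
  · rintro _ ⟨f, hf, rfl⟩
    obtain ⟨t, ht, hle⟩ := hf.exists_sum_le_spiderBound (by omega) hd hmono
    exact ⟨_, ⟨t, ht, rfl⟩, hle⟩
  · rintro _ ⟨t, ht, rfl⟩
    exact ⟨_, ⟨_, Spider.isIndepBroadcast_leafBroadcast hd ht hmono,
      (Spider.sum_leafBroadcast hd ht).symm⟩, le_rfl⟩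
end
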